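/- arXiv:2401.15252 — 2 statements merged into one kernel-verified Lean document; each statement's English description precedes it below -/
import Mathlib

section
/- Let τ > 0 and let v : [−τ, ∞) → [0, ∞) be continuous. Suppose there exist constants α, β with α > β > 0 and J₀ ≥ 0 such that D⁺v(t) ≤ J₀ − α v(t) + β · sup_{t−τ ≤ θ ≤ t} v(θ) for all t ≥ 0. Then v(t) ≤ max{ J₀/(α−β), sup_{−τ ≤ θ ≤ 0} v(θ) } for all t ≥ 0. -/
open Filter

/-- Upper-right Dini derivative. -/
noncomputable def diniUpper (v : ℝ → ℝ) (t : ℝ) : ℝ :=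
  Filter.limsup (fun h => (v (t + h) - v t) / h) (nhdsWithin 0 (Set.Ioi 0))

theorem stmt_7 (τ : ℝ) (hτ : 0 < τ) (v : ℝ → ℝ) (α β J₀ : ℝ)
    (hβ : 0 < β) (hαβ : β < α) (hJ : 0 ≤ J₀)
    (hcont : ContinuousOn v (Set.Ici (-τ)))
    (hnn : ∀ t ≥ -τ, 0 ≤ v t)
    (hdini : ∀ t ≥ (0:ℝ),
      diniUpper v t ≤ J₀ - α * v t + β * sSup (v '' Set.Icc (t - τ) t)) :
    ∀ t ≥ (0:ℝ), v t ≤ max (J₀ / (α - β)) (sSup (v '' Set.Icc (-τ) 0)) := by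
  intro T hT
  by_contra hcon
  push_neg at hcon
  set M := max (J₀ / (α - β)) (sSup (v '' Set.Icc (-τ) 0)) with hMdef
  have hη : 0 < α - β := by linarith
  have hα : 0 < α := lt_trans hβ hαβ
  have hbdd0 : BddAbove (v '' Set.Icc (-τ) 0) :=
    isCompact_Icc.bddAbove_image (hcont.mono Set.Icc_subset_Ici_self)
  have hM0 : ∀ θ ∈ Set.Icc (-τ) 0, v θ ≤ M := fun θ hθ =>
    le_trans (le_csSup hbdd0 (Set.mem_image_of_mem v hθ)) (le_max_right _ _)
  have hv0 : v 0 ≤ M := hM0 0 ⟨by linarith, le_refl 0⟩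
  have hJM : J₀ ≤ (α - β) * M := by
    have h1 : J₀ / (α - β) ≤ M := le_max_left _ _
    rw [div_le_iff₀ hη] at h1
    linarith
  have hCA : ∀ t : ℝ, 0 ≤ t → ContinuousAt v t := fun t ht =>
    hcont.continuousAt (Ici_mem_nhds (by linarith))
  set ε := v T - M with hεdef
  have hε : 0 < ε := sub_pos.mpr hcon
  set ε' := ε * (α + β) / (2 * α) with hε'def
  have hε'pos : 0 < ε' := by
    apply div_pos _ (by linarith)
    nlinarith
  have hαε' : α * ε' = ε * (α + β) / 2 := by
    rw [hε'def]; field_simp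
  have hε'lt : ε' < ε := by
    rw [hε'def, div_lt_iff₀ (by linarith)]
    nlinarith
  have hc : β * ε < α * ε' := by
    rw [hαε']
    nlinarith
  -- first crossing of level M + ε
  have hIccT : ContinuousOn v (Set.Icc 0 T) :=
    hcont.mono (fun x hx => le_trans (by linarith) hx.1)
  set S₁ := Set.Icc 0 T ∩ v ⁻¹' Set.Ici (M + ε) with hS₁def
  have hS₁closed : IsClosed S₁ :=
    hIccT.preimage_isClosed_of_isClosed isClosed_Icc isClosed_Ici
  have hTmem : T ∈ S₁ := ⟨⟨hT, le_refl T⟩, by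
    simp only [Set.mem_preimage, Set.mem_Ici]; rw [hεdef]; linarith⟩
  have hS₁ne : S₁.Nonempty := ⟨T, hTmem⟩
  have hS₁bdd : BddBelow S₁ := ⟨0, fun x hx => hx.1.1⟩
  set t₁ := sInf S₁ with ht₁def
  have ht₁mem : t₁ ∈ S₁ := hS₁closed.csInf_mem hS₁ne hS₁bdd
  have ht₁0 : 0 ≤ t₁ := ht₁mem.1.1
  have ht₁T : t₁ ≤ T := ht₁mem.1.2
  have hvt₁ : M + ε ≤ v t₁ := ht₁mem.2
  have ht₁pos : 0 < t₁ := by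
    rcases eq_or_lt_of_le ht₁0 with h | h
    · exfalso; rw [← h] at hvt₁; linarith
    · exact h
  have hbelow : ∀ t, 0 ≤ t → t < t₁ → v t < M + ε := by
    intro t h0 hlt
    by_contra hge
    push_neg at hge
    exact absurd (csInf_le hS₁bdd ⟨⟨h0, le_trans hlt.le ht₁T⟩, hge⟩) (not_le.2 hlt)
  have hvt₁le : v t₁ ≤ M + ε := by
    have htend : Filter.Tendsto v (nhdsWithin t₁ (Set.Iio t₁)) (nhds (v t₁)) :=
      (hCA t₁ ht₁0).continuousWithinAt
    refine le_of_tendsto htend ?_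
    filter_upwards [Ioo_mem_nhdsLT_of_mem ⟨ht₁pos, le_refl t₁⟩] with t ht
    exact (hbelow t ht.1.le ht.2).le
  have hhist : ∀ θ ∈ Set.Icc (-τ) t₁, v θ ≤ M + ε := by
    intro θ hθ
    rcases le_or_gt θ 0 with h0 | h0
    · exact le_trans (hM0 θ ⟨hθ.1, h0⟩) (by linarith)
    · rcases lt_or_eq_of_le hθ.2 with hlt | heq
      · exact (hbelow θ h0.le hlt).le
      · rw [heq]; exact hvt₁le
  -- last time ≤ t₁ where v ≤ M + ε'
  have hIcct₁ : ContinuousOn v (Set.Icc 0 t₁) :=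
    hcont.mono (fun x hx => le_trans (by linarith) hx.1)
  set A := Set.Icc 0 t₁ ∩ v ⁻¹' Set.Iic (M + ε') with hAdef
  have hAclosed : IsClosed A :=
    hIcct₁.preimage_isClosed_of_isClosed isClosed_Icc isClosed_Iic
  have h0A : (0:ℝ) ∈ A := ⟨⟨le_refl 0, ht₁0⟩, by
    simp only [Set.mem_preimage, Set.mem_Iic]; linarith⟩
  have hAne : A.Nonempty := ⟨0, h0A⟩
  have hAbdd : BddAbove A := ⟨t₁, fun x hx => hx.1.2⟩
  set s := sSup A with hsdef
  have hsA : s ∈ A := hAclosed.csSup_mem hAne hAbdd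
  have hs0 : 0 ≤ s := hsA.1.1
  have hst₁ : s ≤ t₁ := hsA.1.2
  have hvs_le : v s ≤ M + ε' := hsA.2
  have hslt : s < t₁ := by
    rcases lt_or_eq_of_le hst₁ with h | h
    · exact h
    · exfalso; rw [h] at hvs_le; linarith
  have habove : ∀ t, s < t → t ≤ t₁ → M + ε' < v t := by
    intro t hst htt₁
    by_contra hle
    push_neg at hle
    exact absurd (le_csSup hAbdd ⟨⟨le_trans hs0 hst.le, htt₁⟩, hle⟩) (not_le.2 hst)
  have hvs_ge : M + ε' ≤ v s := by
    have htend : Filter.Tendsto v (nhdsWithin s (Set.Ioi s)) (nhds (v s)) :=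
      (hCA s hs0).continuousWithinAt
    refine ge_of_tendsto htend ?_
    filter_upwards [Ioo_mem_nhdsGT_of_mem ⟨le_refl s, hslt⟩] with t ht
    exact (habove t ht.1 ht.2.le).le
  -- bound the delayed supremum at s
  have hKb : sSup (v '' Set.Icc (s - τ) s) ≤ M + ε := by
    apply csSup_le ((Set.nonempty_Icc.2 (by linarith)).image v)
    rintro x ⟨θ, hθ, rfl⟩
    exact hhist θ ⟨by linarith [hθ.1], le_trans hθ.2 hst₁⟩
  have hdin := hdini s hs0
  have hd2 : diniUpper v s ≤ -(α * ε' - β * ε) := by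
    have h1 : β * sSup (v '' Set.Icc (s - τ) s) ≤ β * (M + ε) :=
      mul_le_mul_of_nonneg_left hKb hβ.le
    have h2 : α * (M + ε') ≤ α * v s := mul_le_mul_of_nonneg_left hvs_ge hα.le
    linarith
  have hneg : diniUpper v s < 0 := lt_of_le_of_lt hd2 (by linarith)
  -- extract a point to the right of s where v drops below M + ε'
  set F := nhdsWithin (0:ℝ) (Set.Ioi 0) with hFdef
  set q : ℝ → ℝ := fun h => (v (s + h) - v s) / h with hqdef
  have hdq : diniUpper v s = Filter.limsup q F := rfl
  have hbddq : F.IsBoundedUnder (· ≤ ·) q := by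
    by_contra hb
    have hset : {a : ℝ | ∀ᶠ n in F, q n ≤ a} = ∅ := by
      rw [Set.eq_empty_iff_forall_notMem]
      intro a ha
      exact hb ⟨a, by simpa [Filter.eventually_map] using ha⟩
    have h0 : Filter.limsup q F = 0 := by
      rw [Filter.limsup_eq, hset, Real.sInf_empty]
    rw [hdq, h0] at hneg
    exact lt_irrefl 0 hneg
  have hev : ∀ᶠ h in F, q h < 0 :=
    Filter.eventually_lt_of_limsup_lt (by rw [← hdq]; exact hneg) hbddq
  have hev2 : ∀ᶠ h in F, h < t₁ - s := by
    have hm : Set.Iio (t₁ - s) ∈ F :=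
      nhdsWithin_le_nhds (Iio_mem_nhds (by linarith))
    filter_upwards [hm] with h hh using hh
  have hev3 : ∀ᶠ h in F, h ∈ Set.Ioi (0:ℝ) := self_mem_nhdsWithin
  obtain ⟨h, hh1, hh2, hh3⟩ := (hev.and (hev2.and hev3)).exists
  have hhpos : (0:ℝ) < h := hh3
  have hdrop : v (s + h) - v s < 0 := by
    by_contra hcc
    push_neg at hcc
    exact absurd hh1 (not_lt.2 (div_nonneg hcc hhpos.le))
  have hup : M + ε' < v (s + h) := habove (s + h) (by linarith) (by linarith)
  linarith
end

section
/- Let τ > 0 and let v : [−τ, ∞) → [0, ∞) be continuous. Suppose there exist constants α > β > 0 such that D⁺v(t) ≤ −α v(t) + β · sup_{t−τ ≤ θ ≤ t} v(θ) for all t ≥ 0. Then there exists λ > 0 such that v(t) ≤ (sup_{−τ ≤ θ ≤ 0} v(θ)) · e^{−λ t} for all t ≥ 0; in particular, any λ > 0 satisfying λ ≤ α − β e^{λτ} works. -/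
open Filter

private lemma aux_le_limsup (f : ℝ → ℝ) {a : ℝ} (ha : a < 0)
    (h : ∃ᶠ x in nhdsWithin 0 (Set.Ioi 0), a ≤ f x) :
    a ≤ Filter.limsup f (nhdsWithin 0 (Set.Ioi 0)) := by
  by_cases hb : IsBoundedUnder (· ≤ ·) (nhdsWithin (0:ℝ) (Set.Ioi 0)) f
  · exact le_limsup_of_frequently_le h hb
  · have hempty : {a : ℝ | ∀ᶠ x in nhdsWithin (0:ℝ) (Set.Ioi 0), f x ≤ a} = ∅ := by
      by_contra hne
      obtain ⟨b, hbmem⟩ := Set.nonempty_iff_ne_empty.2 hne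
      exact hb ⟨b, eventually_map.2 hbmem⟩
    rw [Filter.limsup_eq, hempty, Real.sInf_empty]
    exact ha.le

private lemma halanay_strict (τ : ℝ) (hτ : 0 < τ) (v : ℝ → ℝ) (α β : ℝ)
    (hβ : 0 < β)
    (hcont : ContinuousOn v (Set.Ici (-τ)))
    (hnn : ∀ t ≥ -τ, 0 ≤ v t)
    (hdini : ∀ t ≥ (0:ℝ),
      diniUpper v t ≤ -α * v t + β * sSup (v '' Set.Icc (t - τ) t))
    (lam : ℝ) (hlam : 0 < lam) (hstrict : lam < α - β * Real.exp (lam * τ))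
    (ε : ℝ) (hε : 0 < ε) :
    ∀ t ≥ (0:ℝ), v t ≤ (sSup (v '' Set.Icc (-τ) 0) + ε) * Real.exp (-lam * t) := by
  set M := sSup (v '' Set.Icc (-τ) 0) with hM
  have hτ0 : (-τ : ℝ) ≤ 0 := by linarith
  have hbddM : BddAbove (v '' Set.Icc (-τ) 0) :=
    isCompact_Icc.bddAbove_image (hcont.mono (fun x hx => hx.1))
  have hvM : ∀ θ ∈ Set.Icc (-τ) (0:ℝ), v θ ≤ M :=
    fun θ hθ => le_csSup hbddM ⟨θ, hθ, rfl⟩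
  have hM0 : 0 ≤ M := le_trans (hnn 0 hτ0) (hvM 0 ⟨hτ0, le_refl 0⟩)
  have hMε : 0 < M + ε := by linarith
  set w : ℝ → ℝ := fun t => (M + ε) * Real.exp (-lam * t) with hwdef
  -- v ≤ w on [-τ, 0]
  have hinit : ∀ θ ∈ Set.Icc (-τ) (0:ℝ), v θ ≤ w θ := by
    intro θ hθ
    have h1 : (1:ℝ) ≤ Real.exp (-lam * θ) := by
      rw [Real.one_le_exp_iff]
      nlinarith [hθ.2]
    calc v θ ≤ M := hvM θ hθ
    _ = (M + ε) * 1 - ε := by ring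
    _ ≤ (M + ε) * Real.exp (-lam * θ) - ε := by nlinarith
    _ ≤ w θ := by simp only [hwdef]; linarith
  by_contra hcon
  push_neg at hcon
  obtain ⟨t₀, ht₀, ht₀'⟩ := hcon
  set S : Set ℝ := {t | 0 ≤ t ∧ w t < v t} with hSdef
  have hSne : S.Nonempty := ⟨t₀, ht₀, ht₀'⟩
  have hSbdd : BddBelow S := ⟨0, fun s hs => hs.1⟩
  set c : ℝ := sInf S with hcdef
  have hc0 : 0 ≤ c := le_csInf hSne fun s hs => hs.1
  have hcontc : ∀ x : ℝ, 0 ≤ x → ContinuousAt v x := by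
    intro x hx
    exact hcont.continuousAt (Ici_mem_nhds (by linarith))
  have hwcont : Continuous w := by
    apply continuous_const.mul
    exact Real.continuous_exp.comp (continuous_const.mul continuous_id)
  -- v c ≤ w c
  have hle : v c ≤ w c := by
    by_contra hgt
    push_neg at hgt
    rcases eq_or_lt_of_le hc0 with h0 | hpos
    · have h00 : v 0 ≤ w 0 := hinit 0 ⟨hτ0, le_refl 0⟩
      rw [← h0] at hgt; linarith
    · have hev : ∀ᶠ x in nhds c, w x < v x :=
        ContinuousAt.eventually_lt hwcont.continuousAt (hcontc c hc0) hgt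
      have hev2 : ∀ᶠ x in nhds c, (0:ℝ) < x := eventually_gt_nhds hpos
      have hev3 : ∀ᶠ x in nhdsWithin c (Set.Iio c), w x < v x ∧ 0 < x :=
        (hev.and hev2).filter_mono nhdsWithin_le_nhds
      obtain ⟨x, ⟨hx1, hx2⟩, hx3⟩ := (hev3.and self_mem_nhdsWithin).exists
      have : c ≤ x := csInf_le hSbdd ⟨hx2.le, hx1⟩
      exact absurd hx3 (not_lt.2 this)
  -- w c ≤ v c
  have hge : w c ≤ v c := by
    by_contra hlt
    push_neg at hlt
    have hev : ∀ᶠ x in nhds c, v x < w x :=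
      ContinuousAt.eventually_lt (hcontc c hc0) hwcont.continuousAt hlt
    obtain ⟨δ, hδ, hball⟩ := Metric.eventually_nhds_iff.1 hev
    have hlb : ∀ s ∈ S, c + δ ≤ s := by
      intro s hs
      by_contra hsc
      push_neg at hsc
      have hsge : c ≤ s := csInf_le hSbdd hs
      have : dist s c < δ := by
        rw [Real.dist_eq, abs_of_nonneg (by linarith)]
        linarith
      exact absurd hs.2 (not_lt.2 (hball this).le)
    have : c + δ ≤ c := le_csInf hSne hlb
    linarith
  have veq : v c = w c := le_antisymm hle hge
  -- v ≤ w on [0, c]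
  have hbelow : ∀ θ ∈ Set.Icc (0:ℝ) c, v θ ≤ w θ := by
    intro θ hθ
    by_contra hcc
    push_neg at hcc
    have : c ≤ θ := csInf_le hSbdd ⟨hθ.1, hcc⟩
    have hθc : θ = c := le_antisymm hθ.2 this
    rw [hθc] at hcc
    linarith [veq.ge]
  -- bound on the sup
  have hsup : sSup (v '' Set.Icc (c - τ) c) ≤ (M + ε) * Real.exp (-lam * (c - τ)) := by
    apply csSup_le (Set.Nonempty.image _ (Set.nonempty_Icc.2 (by linarith)))
    rintro x ⟨θ, hθ, rfl⟩
    have key : v θ ≤ (M + ε) * Real.exp (-lam * θ) := by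
      rcases le_or_gt θ 0 with h | h
      · exact hinit θ ⟨by linarith [hθ.1], h⟩
      · exact hbelow θ ⟨h.le, hθ.2⟩
    have hmono : Real.exp (-lam * θ) ≤ Real.exp (-lam * (c - τ)) := by
      apply Real.exp_le_exp.2
      nlinarith [hθ.1]
    calc v θ ≤ (M + ε) * Real.exp (-lam * θ) := key
    _ ≤ (M + ε) * Real.exp (-lam * (c - τ)) := by nlinarith
  -- Dini derivative upper bound
  set E := Real.exp (-lam * c) with hEdef
  have hEpos : 0 < E := Real.exp_pos _
  have hexp_split : Real.exp (-lam * (c - τ)) = E * Real.exp (lam * τ) := by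
    rw [hEdef, ← Real.exp_add]; ring_nf
  have hDini : diniUpper v c ≤ (M + ε) * E * (-α + β * Real.exp (lam * τ)) := by
    have h1 := hdini c hc0
    have h2 : β * sSup (v '' Set.Icc (c - τ) c) ≤ β * ((M + ε) * (E * Real.exp (lam * τ))) := by
      apply mul_le_mul_of_nonneg_left _ hβ.le
      rw [← hexp_split]; exact hsup
    have h3 : v c = (M + ε) * E := veq
    rw [h3] at h1
    have hring : (M + ε) * E * (-α + β * Real.exp (lam * τ)) =
        -α * ((M + ε) * E) + β * ((M + ε) * (E * Real.exp (lam * τ))) := by ring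
    linarith [h1, h2]
  -- derivative of w
  have h1 : HasDerivAt (fun t : ℝ => -lam * t) (-lam) c := by
    simpa using (hasDerivAt_id c).const_mul (-lam)
  have h2 : HasDerivAt (fun t : ℝ => Real.exp (-lam * t)) (Real.exp (-lam * c) * (-lam)) c :=
    h1.exp
  have h3 : HasDerivAt w ((M + ε) * (Real.exp (-lam * c) * (-lam))) c := h2.const_mul (M + ε)
  have hDvEq : (M + ε) * (Real.exp (-lam * c) * (-lam)) = (M + ε) * E * (-lam) := by
    rw [hEdef]; ring
  -- strict gap
  have hgap : (M + ε) * E * (-α + β * Real.exp (lam * τ)) < (M + ε) * E * (-lam) := by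
    apply mul_lt_mul_of_pos_left _ (mul_pos hMε hEpos)
    linarith
  set a : ℝ := ((M + ε) * E * (-α + β * Real.exp (lam * τ)) + (M + ε) * E * (-lam)) / 2 with hadef
  have ha1 : (M + ε) * E * (-α + β * Real.exp (lam * τ)) < a := by rw [hadef]; linarith
  have ha2 : a < (M + ε) * E * (-lam) := by rw [hadef]; linarith
  have haneg : a < 0 := lt_trans ha2 (by nlinarith [mul_pos hMε hEpos])
  -- slope of w tends to its derivative along 0⁺
  have hmap : Tendsto (fun h : ℝ => c + h) (nhdsWithin 0 (Set.Ioi 0)) (nhdsWithin c {c}ᶜ) := by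
    apply tendsto_nhdsWithin_of_tendsto_nhds_of_eventually_within
    · have hct : Continuous (fun h : ℝ => c + h) := continuous_const.add continuous_id
      have : Tendsto (fun h : ℝ => c + h) (nhds 0) (nhds c) := by
        simpa using hct.tendsto 0
      exact this.mono_left nhdsWithin_le_nhds
    · filter_upwards [self_mem_nhdsWithin] with h hh
      simp only [Set.mem_compl_iff, Set.mem_singleton_iff]
      intro hcc
      have h0 : h = 0 := by linarith
      exact absurd h0 (ne_of_gt hh)
  have hslope : Tendsto (fun h : ℝ => slope w c (c + h)) (nhdsWithin 0 (Set.Ioi 0))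
      (nhds ((M + ε) * (Real.exp (-lam * c) * (-lam)))) :=
    (hasDerivAt_iff_tendsto_slope.1 h3).comp hmap
  have hgev : ∀ᶠ h in nhdsWithin (0:ℝ) (Set.Ioi 0), a < slope w c (c + h) := by
    apply hslope.eventually
    apply eventually_gt_nhds
    rw [hDvEq]; exact ha2
  -- frequently exceed
  have hfreqS : ∃ᶠ h in nhdsWithin (0:ℝ) (Set.Ioi 0), w (c + h) < v (c + h) := by
    rw [Filter.frequently_iff]
    intro U hU
    obtain ⟨u, hu, hsub⟩ := mem_nhdsGT_iff_exists_Ioo_subset.1 hU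
    have hex : ∃ s ∈ S, s < c + u := by
      by_contra hno
      push_neg at hno
      have : c + u ≤ c := le_csInf hSne hno
      have : (0:ℝ) < u := hu
      linarith
    obtain ⟨s, hsS, hsu⟩ := hex
    have hsge : c ≤ s := csInf_le hSbdd hsS
    have hsne : s ≠ c := by
      intro hh
      rw [hh] at hsS
      exact absurd hsS.2 (not_lt.2 veq.le)
    have hsgt : c < s := lt_of_le_of_ne hsge (Ne.symm hsne)
    refine ⟨s - c, hsub ⟨by linarith, by linarith⟩, ?_⟩
    have : c + (s - c) = s := by ring
    rw [this]
    exact hsS.2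
  have hfreqa : ∃ᶠ h in nhdsWithin (0:ℝ) (Set.Ioi 0), a ≤ (v (c + h) - v c) / h := by
    have := (hfreqS.and_eventually hgev).and_eventually self_mem_nhdsWithin
    apply this.mono
    rintro h ⟨⟨hwv, hsl⟩, hpos⟩
    have hpos' : (0:ℝ) < h := hpos
    have hslval : slope w c (c + h) = (w (c + h) - w c) / h := by
      rw [slope_def_field]
      congr 1
      ring
    have hq : (w (c + h) - w c) / h < (v (c + h) - v c) / h := by
      rw [veq]
      exact div_lt_div_of_pos_right (by linarith) hpos'
    rw [hslval] at hsl
    linarith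
  have hlims : a ≤ diniUpper v c := aux_le_limsup _ haneg hfreqa
  linarith [hDini, hlims, ha1]

theorem stmt_8 (τ : ℝ) (hτ : 0 < τ) (v : ℝ → ℝ) (α β : ℝ)
    (hβ : 0 < β) (hαβ : β < α)
    (hcont : ContinuousOn v (Set.Ici (-τ)))
    (hnn : ∀ t ≥ -τ, 0 ≤ v t)
    (hdini : ∀ t ≥ (0:ℝ),
      diniUpper v t ≤ -α * v t + β * sSup (v '' Set.Icc (t - τ) t)) :
    (∃ lam > (0:ℝ), ∀ t ≥ (0:ℝ),
        v t ≤ sSup (v '' Set.Icc (-τ) 0) * Real.exp (-lam * t)) ∧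
    (∀ lam > (0:ℝ), lam ≤ α - β * Real.exp (lam * τ) → ∀ t ≥ (0:ℝ),
        v t ≤ sSup (v '' Set.Icc (-τ) 0) * Real.exp (-lam * t)) := by
  have main : ∀ lam > (0:ℝ), lam ≤ α - β * Real.exp (lam * τ) → ∀ t ≥ (0:ℝ),
      v t ≤ sSup (v '' Set.Icc (-τ) 0) * Real.exp (-lam * t) := by
    intro lam hlam hle t ht
    set M := sSup (v '' Set.Icc (-τ) 0) with hM
    -- step 1: for each 0 < l < lam, v t ≤ M * exp(-l t)
    have step1 : ∀ l, 0 < l → l < lam → v t ≤ M * Real.exp (-l * t) := by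
      intro l hl0 hllam
      have hstrict : l < α - β * Real.exp (l * τ) := by
        have : Real.exp (l * τ) ≤ Real.exp (lam * τ) :=
          Real.exp_le_exp.2 (mul_le_mul_of_nonneg_right hllam.le hτ.le)
        nlinarith
      have hε : ∀ ε > (0:ℝ), v t ≤ M * Real.exp (-l * t) + ε := by
        intro ε hε
        have h1 := halanay_strict τ hτ v α β hβ hcont hnn hdini l hl0 hstrict ε hε t ht
        have h2 : Real.exp (-l * t) ≤ 1 := by
          rw [Real.exp_le_one_iff]
          nlinarith
        nlinarith [Real.exp_pos (-l * t)]
      exact le_of_forall_pos_le_add fun ε he => hε ε he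
    -- step 2: take l → lam⁻
    have htd : Tendsto (fun l : ℝ => M * Real.exp (-l * t)) (nhdsWithin lam (Set.Iio lam))
        (nhds (M * Real.exp (-lam * t))) := by
      have : Continuous fun l : ℝ => M * Real.exp (-l * t) := by
        apply continuous_const.mul
        exact Real.continuous_exp.comp (continuous_id.neg.mul continuous_const)
      exact (this.tendsto lam).mono_left nhdsWithin_le_nhds
    have hev : ∀ᶠ l in nhdsWithin lam (Set.Iio lam), v t ≤ M * Real.exp (-l * t) := by
      filter_upwards [Ioo_mem_nhdsLT_of_mem (⟨hlam, le_refl lam⟩ : lam ∈ Set.Ioc 0 lam)]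
        with l hl
      exact step1 l hl.1 hl.2
    exact ge_of_tendsto htd hev
  refine ⟨?_, main⟩
  -- existence of a suitable lam
  have hcf : ContinuousAt (fun l : ℝ => l + β * Real.exp (l * τ)) 0 := by
    apply Continuous.continuousAt
    exact continuous_id.add (continuous_const.mul
      (Real.continuous_exp.comp (continuous_id.mul continuous_const)))
  have hval : (fun l : ℝ => l + β * Real.exp (l * τ)) 0 < α := by simp; linarith
  have hev : ∀ᶠ l in nhds (0:ℝ), l + β * Real.exp (l * τ) < α :=
    hcf.eventually_lt continuousAt_const hval
  have hev' : ∀ᶠ l in nhdsWithin (0:ℝ) (Set.Ioi 0),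
      (l + β * Real.exp (l * τ) < α ∧ 0 < l) := by
    refine Eventually.and (hev.filter_mono nhdsWithin_le_nhds) self_mem_nhdsWithin
  obtain ⟨l, hl1, hl2⟩ := hev'.exists
  exact ⟨l, hl2, main l hl2 (by linarith)⟩
end
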